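/- arXiv:2504.01544 — 5 statements merged into one kernel-verified Lean document; each statement's English description precedes it below -/
import Mathlib

section
/- Let ω > 0, α ≠ 0, and (a₁, b₁) ∈ ℝ² with (a₁, b₁) ≠ (0,0). Define f₁₁(x₀, y₀) = −(π/ω²) b₁ + 3πα y₀ (ω² x₀² + y₀²)/(4ω⁵) and f₂₁(x₀, y₀) = (π/ω) a₁ − 3πα x₀ (ω² x₀² + y₀²)/(4ω³). Then the point x₀* = ∛(4a₁³/(3α(a₁² + b₁²))), y₀* = ∛(4b₁³ω³/(3α(a₁² + b₁²))) (real cube roots) satisfies f₁₁(x₀*, y₀*) = 0 and f₂₁(x₀*, y₀*) = 0. -/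
open Real

/-- The real cube root. -/
noncomputable def cbrt (x : ℝ) : ℝ := Real.sign x * |x| ^ ((1 : ℝ) / 3)

lemma sign_mul_abs' (x : ℝ) : Real.sign x * |x| = x := by
  rcases lt_trichotomy x 0 with hx | hx | hx
  · rw [Real.sign_of_neg hx, abs_of_neg hx]; ring
  · simp [hx]
  · rw [Real.sign_of_pos hx, abs_of_pos hx]; ring

lemma sign_mul' (x y : ℝ) : Real.sign (x * y) = Real.sign x * Real.sign y := by
  rcases lt_trichotomy x 0 with hx | hx | hx <;>
    rcases lt_trichotomy y 0 with hy | hy | hy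
  · rw [Real.sign_of_pos (mul_pos_of_neg_of_neg hx hy), Real.sign_of_neg hx,
      Real.sign_of_neg hy]; ring
  · simp [hy]
  · rw [Real.sign_of_neg (mul_neg_of_neg_of_pos hx hy), Real.sign_of_neg hx,
      Real.sign_of_pos hy]; ring
  · simp [hx]
  · simp [hx]
  · simp [hx]
  · rw [Real.sign_of_neg (mul_neg_of_pos_of_neg hx hy), Real.sign_of_pos hx,
      Real.sign_of_neg hy]; ring
  · simp [hy]
  · rw [Real.sign_of_pos (mul_pos hx hy), Real.sign_of_pos hx, Real.sign_of_pos hy]; ring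

lemma cbrt_mul (x y : ℝ) : cbrt (x * y) = cbrt x * cbrt y := by
  unfold cbrt
  rw [sign_mul', abs_mul, Real.mul_rpow (abs_nonneg x) (abs_nonneg y)]
  ring

lemma cbrt_cube (x : ℝ) : cbrt (x ^ 3) = x := by
  unfold cbrt
  have h1 : Real.sign (x ^ 3) = Real.sign x := by
    rcases lt_trichotomy x 0 with hx | hx | hx
    · rw [Real.sign_of_neg hx, Real.sign_of_neg (by nlinarith [mul_pos (mul_pos (neg_pos.mpr hx) (neg_pos.mpr hx)) (neg_pos.mpr hx)] : x ^ 3 < 0)]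
    · simp [hx]
    · rw [Real.sign_of_pos hx, Real.sign_of_pos (by positivity)]
  have h2 : |x ^ 3| ^ ((1:ℝ)/3) = |x| := by
    rw [abs_pow, ← Real.rpow_natCast |x| 3, ← Real.rpow_mul (abs_nonneg x)]
    norm_num
  rw [h1, h2, sign_mul_abs']

lemma cbrt_pow3 (x : ℝ) : cbrt x ^ 3 = x := by
  unfold cbrt
  rw [mul_pow, ← Real.rpow_natCast (|x| ^ ((1:ℝ)/3)) 3, ← Real.rpow_mul (abs_nonneg x)]
  norm_num
  have : Real.sign x ^ 3 = Real.sign x := by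
    rcases Real.sign_apply_eq x with h | h | h <;> rw [h] <;> ring
  rw [this, sign_mul_abs']

/-- the point (x₀*, y₀*) given by real cube roots is a zero of the
two components f₁₁, f₂₁ of the bifurcation function. -/
theorem stmt_7 (ω α a₁ b₁ : ℝ) (hω : 0 < ω) (hα : α ≠ 0) (hab : (a₁, b₁) ≠ (0, 0)) :
    -(π / ω ^ 2) * b₁ + 3 * π * α * cbrt (4 * b₁ ^ 3 * ω ^ 3 / (3 * α * (a₁ ^ 2 + b₁ ^ 2))) *
        (ω ^ 2 * cbrt (4 * a₁ ^ 3 / (3 * α * (a₁ ^ 2 + b₁ ^ 2))) ^ 2 +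
          cbrt (4 * b₁ ^ 3 * ω ^ 3 / (3 * α * (a₁ ^ 2 + b₁ ^ 2))) ^ 2) / (4 * ω ^ 5) = 0 ∧
    (π / ω) * a₁ - 3 * π * α * cbrt (4 * a₁ ^ 3 / (3 * α * (a₁ ^ 2 + b₁ ^ 2))) *
        (ω ^ 2 * cbrt (4 * a₁ ^ 3 / (3 * α * (a₁ ^ 2 + b₁ ^ 2))) ^ 2 +
          cbrt (4 * b₁ ^ 3 * ω ^ 3 / (3 * α * (a₁ ^ 2 + b₁ ^ 2))) ^ 2) / (4 * ω ^ 3) = 0 := by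
  have hab' : a₁ ^ 2 + b₁ ^ 2 ≠ 0 := by
    intro h
    apply hab
    have ha : a₁ = 0 := by nlinarith [sq_nonneg a₁, sq_nonneg b₁]
    have hb : b₁ = 0 := by nlinarith [sq_nonneg a₁, sq_nonneg b₁]
    simp [ha, hb]
  set c : ℝ := 3 * α * (a₁ ^ 2 + b₁ ^ 2) with hc
  have hc0 : c ≠ 0 := by
    simp only [hc]
    positivity
  set k : ℝ := cbrt (4 / c) with hk
  have hx : cbrt (4 * a₁ ^ 3 / c) = a₁ * k := by
    rw [show 4 * a₁ ^ 3 / c = a₁ ^ 3 * (4 / c) by ring, cbrt_mul, cbrt_cube]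
  have hy : cbrt (4 * b₁ ^ 3 * ω ^ 3 / c) = b₁ * ω * k := by
    rw [show 4 * b₁ ^ 3 * ω ^ 3 / c = (b₁ * ω) ^ 3 * (4 / c) by ring, cbrt_mul, cbrt_cube]
  have hk3 : k ^ 3 = 4 / c := cbrt_pow3 _
  rw [hx, hy]
  have hω' : ω ≠ 0 := ne_of_gt hω
  have hck : c * k ^ 3 = 4 := by
    rw [hk3]; field_simp
  constructor
  · field_simp
    linear_combination (π * b₁) * hck
  · field_simp
    linear_combination (-(π * a₁)) * hck
end

section
/- Let α < 0, ω₁ ∈ ℝ, and A > 0, ψ ∈ [0, 2π). The pair (A, ψ) satisfies A sin(2ψ) = 0 and ω₁ + (3α/4)A² + (1/2)cos(2ψ) = 0 if and only if ψ ∈ {0, π/2, π, 3π/2} and A² = −(4/(3α))(ω₁ + cos(2ψ)/2). Consequently, for ψ ∈ {0, π} such a solution with A > 0 exists if and only if ω₁ > −1/2, and for ψ ∈ {π/2, 3π/2} it exists if and only if ω₁ > 1/2. -/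
open Real


lemma mem_of_sin (ψ : ℝ) (h0 : 0 ≤ ψ) (h2 : ψ < 2 * π) (hs : Real.sin (2 * ψ) = 0) :
    ψ ∈ ({0, π / 2, π, 3 * π / 2} : Set ℝ) := by
  have hπ := Real.pi_pos
  obtain ⟨n, hn⟩ := Real.sin_eq_zero_iff.mp hs
  have hn0 : (0:ℤ) ≤ n := by
    by_contra h
    push_neg at h
    have hr : (n:ℝ) < 0 := by exact_mod_cast h
    nlinarith
  have hn3 : n ≤ 3 := by
    by_contra h
    push_neg at h
    have hr : (4:ℝ) ≤ (n:ℝ) := by exact_mod_cast h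
    nlinarith
  simp only [Set.mem_insert_iff, Set.mem_singleton_iff]
  interval_cases n
  · left; push_cast at hn; linarith
  · right; left; push_cast at hn; linarith
  · right; right; left; push_cast at hn; linarith
  · right; right; right; push_cast at hn; linarith

lemma sin_of_mem (ψ : ℝ) (h : ψ ∈ ({0, π / 2, π, 3 * π / 2} : Set ℝ)) :
    Real.sin (2 * ψ) = 0 := by
  simp only [Set.mem_insert_iff, Set.mem_singleton_iff] at h
  rcases h with h | h | h | h <;> subst h
  · simp
  · rw [show 2 * (π / 2) = π by ring, Real.sin_pi]
  · rw [show 2 * π = ((2:ℤ)) * π by push_cast; ring]; exact Real.sin_int_mul_pi 2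
  · rw [show 2 * (3 * π / 2) = ((3:ℤ)) * π by push_cast; ring]; exact Real.sin_int_mul_pi 3

lemma exists_A (α ω₁ c : ℝ) (hα : α < 0) :
    (∃ A : ℝ, 0 < A ∧ ω₁ + (3 * α / 4) * A ^ 2 + (1 / 2) * c = 0) ↔ 0 < ω₁ + c / 2 := by
  constructor
  · rintro ⟨A, hA, heq⟩
    have h2 : 0 < A ^ 2 := pow_pos hA 2
    nlinarith
  · intro h
    have h1 : -(4 / (3 * α)) > 0 := by
      have : 4 / (3 * α) < 0 := div_neg_of_pos_of_neg (by norm_num) (by linarith)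
      linarith
    have hx : 0 < -(4 / (3 * α)) * (ω₁ + c / 2) := mul_pos h1 h
    refine ⟨Real.sqrt (-(4 / (3 * α)) * (ω₁ + c / 2)), Real.sqrt_pos.mpr hx, ?_⟩
    rw [Real.sq_sqrt hx.le]
    have hα' : (3 * α) ≠ 0 := ne_of_lt (by linarith)
    have hα0 : α ≠ 0 := ne_of_lt hα
    field_simp
    ring

/-- characterization of nontrivial equilibria of the slow-flow system,
and existence conditions ω₁ > −1/2 (for ψ ∈ {0, π}), ω₁ > 1/2 (for ψ ∈ {π/2, 3π/2}). -/
theorem stmt_11 (α ω₁ : ℝ) (hα : α < 0) :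
    (∀ A ψ : ℝ, 0 < A → 0 ≤ ψ → ψ < 2 * π →
      ((A * Real.sin (2 * ψ) = 0 ∧ ω₁ + (3 * α / 4) * A ^ 2 + (1 / 2) * Real.cos (2 * ψ) = 0) ↔
        (ψ ∈ ({0, π / 2, π, 3 * π / 2} : Set ℝ) ∧
          A ^ 2 = -(4 / (3 * α)) * (ω₁ + Real.cos (2 * ψ) / 2)))) ∧
    (∀ ψ ∈ ({0, π} : Set ℝ),
      ((∃ A : ℝ, 0 < A ∧ A * Real.sin (2 * ψ) = 0 ∧
          ω₁ + (3 * α / 4) * A ^ 2 + (1 / 2) * Real.cos (2 * ψ) = 0) ↔ ω₁ > -(1 / 2))) ∧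
    (∀ ψ ∈ ({π / 2, 3 * π / 2} : Set ℝ),
      ((∃ A : ℝ, 0 < A ∧ A * Real.sin (2 * ψ) = 0 ∧
          ω₁ + (3 * α / 4) * A ^ 2 + (1 / 2) * Real.cos (2 * ψ) = 0) ↔ ω₁ > 1 / 2)) := by
  have hα' : (3 * α) ≠ 0 := ne_of_lt (by linarith)
  have hα0 : α ≠ 0 := ne_of_lt hα
  refine ⟨?_, ?_, ?_⟩
  · intro A ψ hA h0 h2
    constructor
    · rintro ⟨h1, heq⟩
      have hs : Real.sin (2 * ψ) = 0 := by
        rcases mul_eq_zero.mp h1 with h | h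
        · exact absurd h (ne_of_gt hA)
        · exact h
      refine ⟨mem_of_sin ψ h0 h2 hs, ?_⟩
      field_simp
      linarith
    · rintro ⟨hmem, hA2⟩
      have hs := sin_of_mem ψ hmem
      refine ⟨by rw [hs, mul_zero], ?_⟩
      rw [hA2]
      field_simp
      ring
  · intro ψ hmem
    have hc : Real.cos (2 * ψ) = 1 := by
      rcases hmem with h | h <;> subst h
      · simp
      · rw [show 2 * π = 2 * π by ring]; exact Real.cos_two_pi
    have hs : Real.sin (2 * ψ) = 0 := by
      rcases hmem with h | h <;> subst h
      · simp
      · exact Real.sin_two_pi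
    rw [hc, hs]
    have := exists_A α ω₁ 1 hα
    constructor
    · rintro ⟨A, hA, _, heq⟩
      have := this.mp ⟨A, hA, heq⟩
      linarith
    · intro h
      obtain ⟨A, hA, heq⟩ := this.mpr (by linarith)
      exact ⟨A, hA, by rw [mul_zero], heq⟩
  · intro ψ hmem
    have hc : Real.cos (2 * ψ) = -1 := by
      rcases hmem with h | h <;> subst h
      · rw [show 2 * (π / 2) = π by ring]; exact Real.cos_pi
      · rw [show 2 * (3 * π / 2) = π + 2 * π by ring, Real.cos_add_two_pi]; exact Real.cos_pi
    have hs : Real.sin (2 * ψ) = 0 := by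
      rcases hmem with h | h <;> subst h
      · rw [show 2 * (π / 2) = π by ring]; exact Real.sin_pi
      · rw [show 2 * (3 * π / 2) = π + 2 * π by ring, Real.sin_add_two_pi]; exact Real.sin_pi
    rw [hc, hs]
    have := exists_A α ω₁ (-1) hα
    constructor
    · rintro ⟨A, hA, _, heq⟩
      have := this.mp ⟨A, hA, heq⟩
      linarith
    · intro h
      obtain ⟨A, hA, heq⟩ := this.mpr (by norm_num; linarith)
      exact ⟨A, hA, by rw [mul_zero], heq⟩
end

section
/- Let α < 0 and ω₁ ∈ ℝ, and consider the set S of points (M, N) ∈ ℝ² satisfying ω₁ N − N/2 + (3α/4)N(M² + N²) = 0 and −ω₁ M − M/2 − (3α/4)M(M² + N²) = 0. Then: (1) if ω₁ < −1/2, S = {(0,0)}; (2) if −1/2 < ω₁ < 1/2, S = {(0,0), (r, 0), (−r, 0)} where r = √(−4(ω₁ + 1/2)/(3α)); (3) if ω₁ > 1/2, S = {(0,0), (r, 0), (−r, 0), (0, s), (0, −s)} where r = √(−4(ω₁ + 1/2)/(3α)) and s = √(−4(ω₁ − 1/2)/(3α)). -/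
open Real

private lemma sq_cases (a A : ℝ) (h : a ^ 2 = A) :
    a = Real.sqrt A ∨ a = -Real.sqrt A := by
  have hs : Real.sqrt A = |a| := by rw [← h, Real.sqrt_sq_eq_abs]
  rcases abs_cases a with ⟨h1, _⟩ | ⟨h1, _⟩
  · left; rw [hs, h1]
  · right; rw [hs, h1]; ring

/-- classification of the equilibrium set of the Cartesian slow-flow system
according to the value of ω₁ (for α < 0). -/
theorem stmt_13 (α ω₁ : ℝ) (hα : α < 0) (S : Set (ℝ × ℝ))
    (hS : S = {p : ℝ × ℝ |
      ω₁ * p.2 - p.2 / 2 + (3 * α / 4) * p.2 * (p.1 ^ 2 + p.2 ^ 2) = 0 ∧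
      -(ω₁ * p.1) - p.1 / 2 - (3 * α / 4) * p.1 * (p.1 ^ 2 + p.2 ^ 2) = 0}) :
    (ω₁ < -(1 / 2) → S = {(0, 0)}) ∧
    (-(1 / 2) < ω₁ → ω₁ < 1 / 2 →
      S = {(0, 0), (Real.sqrt (-(4 * (ω₁ + 1 / 2)) / (3 * α)), 0),
        (-Real.sqrt (-(4 * (ω₁ + 1 / 2)) / (3 * α)), 0)}) ∧
    (1 / 2 < ω₁ →
      S = {(0, 0), (Real.sqrt (-(4 * (ω₁ + 1 / 2)) / (3 * α)), 0),
        (-Real.sqrt (-(4 * (ω₁ + 1 / 2)) / (3 * α)), 0),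
        (0, Real.sqrt (-(4 * (ω₁ - 1 / 2)) / (3 * α))),
        (0, -Real.sqrt (-(4 * (ω₁ - 1 / 2)) / (3 * α)))}) := by
  subst hS
  have hα3 : (3:ℝ) * α < 0 := by linarith
  have hαne : (3:ℝ) * α ≠ 0 := ne_of_lt hα3
  have keyP : ∀ x : ℝ, x ^ 2 = -(4 * (ω₁ + 1 / 2)) / (3 * α) →
      -(ω₁ * x) - x / 2 - (3 * α / 4) * x * (x ^ 2 + (0:ℝ) ^ 2) = 0 := by
    intro x hx
    have h : (3 * α / 4) * x ^ 2 = -(ω₁ + 1 / 2) := by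
      rw [hx]; field_simp [hαne, hα.ne]
    linear_combination (-x) * h
  have keyQ : ∀ y : ℝ, y ^ 2 = -(4 * (ω₁ - 1 / 2)) / (3 * α) →
      ω₁ * y - y / 2 + (3 * α / 4) * y * ((0:ℝ) ^ 2 + y ^ 2) = 0 := by
    intro y hy
    have h : (3 * α / 4) * y ^ 2 = -(ω₁ - 1 / 2) := by
      rw [hy]; field_simp [hαne, hα.ne]
    linear_combination y * h
  refine ⟨?_, ?_, ?_⟩
  · intro hw
    ext ⟨M, N⟩
    simp only [Set.mem_setOf_eq, Set.mem_singleton_iff, Prod.mk.injEq]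
    constructor
    · rintro ⟨h1, h2⟩
      have e1 : N * (ω₁ - 1 / 2 + (3 * α / 4) * (M ^ 2 + N ^ 2)) = 0 := by
        linear_combination h1
      have e2 : M * (ω₁ + 1 / 2 + (3 * α / 4) * (M ^ 2 + N ^ 2)) = 0 := by
        linear_combination -h2
      rcases mul_eq_zero.mp e2 with hM | hf2
      · rcases mul_eq_zero.mp e1 with hN | hf1
        · exact ⟨hM, hN⟩
        · exfalso; nlinarith [sq_nonneg M, sq_nonneg N]
      · exfalso; nlinarith [sq_nonneg M, sq_nonneg N]
    · rintro ⟨rfl, rfl⟩; norm_num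
  · intro hw1 hw2
    have hA : (0:ℝ) ≤ -(4 * (ω₁ + 1 / 2)) / (3 * α) :=
      le_of_lt (div_pos_of_neg_of_neg (by linarith) hα3)
    have hs : (Real.sqrt (-(4 * (ω₁ + 1 / 2)) / (3 * α))) ^ 2
        = -(4 * (ω₁ + 1 / 2)) / (3 * α) := Real.sq_sqrt hA
    ext ⟨M, N⟩
    simp only [Set.mem_setOf_eq, Set.mem_insert_iff, Set.mem_singleton_iff, Prod.mk.injEq]
    constructor
    · rintro ⟨h1, h2⟩
      have e1 : N * (ω₁ - 1 / 2 + (3 * α / 4) * (M ^ 2 + N ^ 2)) = 0 := by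
        linear_combination h1
      have e2 : M * (ω₁ + 1 / 2 + (3 * α / 4) * (M ^ 2 + N ^ 2)) = 0 := by
        linear_combination -h2
      rcases mul_eq_zero.mp e2 with hM | hf2
      · rcases mul_eq_zero.mp e1 with hN | hf1
        · exact Or.inl ⟨hM, hN⟩
        · exfalso; nlinarith [sq_nonneg M, sq_nonneg N]
      · rcases mul_eq_zero.mp e1 with hN | hf1
        · have hM2 : M ^ 2 = -(4 * (ω₁ + 1 / 2)) / (3 * α) := by
            rw [hN] at hf2
            rw [eq_div_iff hαne]
            linear_combination 4 * hf2
          rcases sq_cases M _ hM2 with h | h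
          · exact Or.inr (Or.inl ⟨h, hN⟩)
          · exact Or.inr (Or.inr ⟨h, hN⟩)
        · exfalso; linarith
    · rintro (⟨rfl, rfl⟩ | ⟨rfl, rfl⟩ | ⟨rfl, rfl⟩)
      · norm_num
      · exact ⟨by ring, keyP _ hs⟩
      · exact ⟨by ring, keyP _ (by rw [neg_pow]; simpa using hs)⟩
  · intro hw
    have hA : (0:ℝ) ≤ -(4 * (ω₁ + 1 / 2)) / (3 * α) :=
      le_of_lt (div_pos_of_neg_of_neg (by linarith) hα3)
    have hs : (Real.sqrt (-(4 * (ω₁ + 1 / 2)) / (3 * α))) ^ 2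
        = -(4 * (ω₁ + 1 / 2)) / (3 * α) := Real.sq_sqrt hA
    have hB : (0:ℝ) ≤ -(4 * (ω₁ - 1 / 2)) / (3 * α) :=
      le_of_lt (div_pos_of_neg_of_neg (by linarith) hα3)
    have ht : (Real.sqrt (-(4 * (ω₁ - 1 / 2)) / (3 * α))) ^ 2
        = -(4 * (ω₁ - 1 / 2)) / (3 * α) := Real.sq_sqrt hB
    ext ⟨M, N⟩
    simp only [Set.mem_setOf_eq, Set.mem_insert_iff, Set.mem_singleton_iff, Prod.mk.injEq]
    constructor
    · rintro ⟨h1, h2⟩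
      have e1 : N * (ω₁ - 1 / 2 + (3 * α / 4) * (M ^ 2 + N ^ 2)) = 0 := by
        linear_combination h1
      have e2 : M * (ω₁ + 1 / 2 + (3 * α / 4) * (M ^ 2 + N ^ 2)) = 0 := by
        linear_combination -h2
      rcases mul_eq_zero.mp e2 with hM | hf2
      · rcases mul_eq_zero.mp e1 with hN | hf1
        · exact Or.inl ⟨hM, hN⟩
        · have hN2 : N ^ 2 = -(4 * (ω₁ - 1 / 2)) / (3 * α) := by
            rw [hM] at hf1
            rw [eq_div_iff hαne]
            linear_combination 4 * hf1
          rcases sq_cases N _ hN2 with h | h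
          · exact Or.inr (Or.inr (Or.inr (Or.inl ⟨hM, h⟩)))
          · exact Or.inr (Or.inr (Or.inr (Or.inr ⟨hM, h⟩)))
      · rcases mul_eq_zero.mp e1 with hN | hf1
        · have hM2 : M ^ 2 = -(4 * (ω₁ + 1 / 2)) / (3 * α) := by
            rw [hN] at hf2
            rw [eq_div_iff hαne]
            linear_combination 4 * hf2
          rcases sq_cases M _ hM2 with h | h
          · exact Or.inr (Or.inl ⟨h, hN⟩)
          · exact Or.inr (Or.inr (Or.inl ⟨h, hN⟩))
        · exfalso; linarith
    · rintro (⟨rfl, rfl⟩ | ⟨rfl, rfl⟩ | ⟨rfl, rfl⟩ | ⟨rfl, rfl⟩ | ⟨rfl, rfl⟩)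
      · norm_num
      · exact ⟨by ring, keyP _ hs⟩
      · exact ⟨by ring, keyP _ (by rw [neg_pow]; simpa using hs)⟩
      · exact ⟨keyQ _ ht, by ring⟩
      · exact ⟨keyQ _ (by rw [neg_pow]; simpa using ht), by ring⟩
end

section
/- Let ω_p > 0, ω₁ > −1/2, α < 0, and let G : ℝ² → ℝ² be the map G(M, N) = ((1/ω_p)[ω₁N − N/2 + (3α/4)N(M²+N²)], (1/ω_p)[−ω₁M − M/2 − (3α/4)M(M²+N²)]). At each equilibrium point (±r, 0) with r = √(−4(ω₁ + 1/2)/(3α)), the Jacobian matrix of G has trace 0 and determinant (2ω₁ + 1)/ω_p², which is strictly positive; hence its eigenvalues are purely imaginary and nonzero. -/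
open Real Matrix Complex

/-- The continuous linear map ℝ × ℝ → ℝ × ℝ associated to a 2×2 real matrix. -/
noncomputable def matCLM (J : Matrix (Fin 2) (Fin 2) ℝ) : ℝ × ℝ →L[ℝ] ℝ × ℝ :=
  LinearMap.toContinuousLinearMap (Matrix.toLin (Module.Basis.finTwoProd ℝ) (Module.Basis.finTwoProd ℝ) J)

/-- at the equilibria (±r, 0) of the Cartesian slow-flow system, the Jacobian
matrix has trace 0 and determinant (2ω₁+1)/ωₚ² > 0, and its eigenvalues are purely
imaginary and nonzero. -/
theorem stmt_15 (ωp ω₁ α : ℝ) (hωp : 0 < ωp) (hω₁ : ω₁ > -(1 / 2)) (hα : α < 0)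
    (r : ℝ) (hr : r = Real.sqrt (-(4 * (ω₁ + 1 / 2)) / (3 * α))) :
    ∀ p : ℝ × ℝ, p = (r, 0) ∨ p = (-r, 0) →
      ∃ J : Matrix (Fin 2) (Fin 2) ℝ,
        HasFDerivAt (fun q : ℝ × ℝ =>
            ((1 / ωp) * (ω₁ * q.2 - q.2 / 2 + (3 * α / 4) * q.2 * (q.1 ^ 2 + q.2 ^ 2)),
             (1 / ωp) * (-(ω₁ * q.1) - q.1 / 2 - (3 * α / 4) * q.1 * (q.1 ^ 2 + q.2 ^ 2))))
          (matCLM J) p ∧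
        J.trace = 0 ∧
        J.det = (2 * ω₁ + 1) / ωp ^ 2 ∧
        0 < J.det ∧
        ∀ z ∈ spectrum ℂ (J.map (Complex.ofReal ·)), z.re = 0 ∧ z ≠ 0 := by
  intro p hp
  have hαne : α ≠ 0 := ne_of_lt hα
  have hωpne : ωp ≠ 0 := ne_of_gt hωp
  have hpos : 0 < 2 * ω₁ + 1 := by linarith
  have hk : (0:ℝ) ≤ -(4 * (ω₁ + 1 / 2)) / (3 * α) := by
    rw [div_nonneg_iff]; right; constructor <;> nlinarith
  have hr2 : r ^ 2 = -(4 * (ω₁ + 1 / 2)) / (3 * α) := by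
    rw [hr, sq_sqrt hk]
  have hp2 : p.2 = 0 := by rcases hp with h | h <;> simp [h]
  have hp1 : (3 * α / 4) * p.1 ^ 2 = -(ω₁ + 1 / 2) := by
    have h1 : p.1 ^ 2 = r ^ 2 := by rcases hp with h | h <;> simp [h] <;> ring
    rw [h1, hr2]; field_simp
  set a : ℝ := -(1 / ωp) with ha
  set b : ℝ := (2 * ω₁ + 1) / ωp with hb
  have hab : a * b < 0 := by
    have : a * b = -((2 * ω₁ + 1) / ωp ^ 2) := by rw [ha, hb]; ring
    rw [this, neg_lt_zero]; positivity
  refine ⟨!![0, a; b, 0], ?_, ?_, ?_, ?_, ?_⟩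
  · -- derivative
    have heq : (fun q : ℝ × ℝ =>
            ((1 / ωp) * (ω₁ * q.2 - q.2 / 2 + (3 * α / 4) * q.2 * (q.1 ^ 2 + q.2 ^ 2)),
             (1 / ωp) * (-(ω₁ * q.1) - q.1 / 2 - (3 * α / 4) * q.1 * (q.1 ^ 2 + q.2 ^ 2))))
        = (fun q : ℝ × ℝ =>
            ((1 / ωp) * (ω₁ * q.2 - (2⁻¹ : ℝ) * q.2 + ((3 * α / 4) * q.2) * (q.1 * q.1 + q.2 * q.2)),
             (1 / ωp) * (-(ω₁ * q.1) - (2⁻¹ : ℝ) * q.1 - ((3 * α / 4) * q.1) * (q.1 * q.1 + q.2 * q.2)))) := by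
      funext q; exact Prod.ext (by ring) (by ring)
    rw [heq]
    have hM : HasFDerivAt (fun q : ℝ × ℝ => q.1) (ContinuousLinearMap.fst ℝ ℝ ℝ) p :=
      hasFDerivAt_fst
    have hN : HasFDerivAt (fun q : ℝ × ℝ => q.2) (ContinuousLinearMap.snd ℝ ℝ ℝ) p :=
      hasFDerivAt_snd
    have h1 := (((hN.const_mul ω₁).sub (hN.const_mul (2⁻¹ : ℝ))).add
      ((hN.const_mul (3 * α / 4)).mul ((hM.mul hM).add (hN.mul hN)))).const_mul (1 / ωp)
    have h2 := ((((hM.const_mul ω₁).neg).sub (hM.const_mul (2⁻¹ : ℝ))).sub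
      ((hM.const_mul (3 * α / 4)).mul ((hM.mul hM).add (hN.mul hN)))).const_mul (1 / ωp)
    have hF : HasFDerivAt _ _ p := HasFDerivAt.prodMk h1 h2
    refine hF.congr_fderiv (Eq.symm ?_)
    refine ContinuousLinearMap.ext fun v => ?_
    obtain ⟨x, y⟩ := v
    have hm : matCLM !![0, a; b, 0] (x, y) = (a * y, b * x) := by
      simp [matCLM, Matrix.toLin_finTwoProd_apply]
    rw [hm]
    simp only [ContinuousLinearMap.prod_apply, ContinuousLinearMap.add_apply,
      ContinuousLinearMap.sub_apply, ContinuousLinearMap.smul_apply,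
      ContinuousLinearMap.coe_fst', ContinuousLinearMap.coe_snd',
      ContinuousLinearMap.neg_apply, smul_eq_mul, Pi.add_apply, Pi.mul_apply]
    refine Prod.ext ?_ ?_
    · show a * y = _
      simp only [ContinuousLinearMap.coe_fst', ContinuousLinearMap.coe_snd',
        Function.comp_apply]
      rw [ha, hp2]
      linear_combination (-(y / ωp)) * hp1
    · show b * x = _
      simp only [ContinuousLinearMap.coe_fst', ContinuousLinearMap.coe_snd',
        Function.comp_apply]
      rw [hb, hp2]
      linear_combination (3 * x / ωp) * hp1
  · simp [Matrix.trace_fin_two]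
  · rw [Matrix.det_fin_two_of, ha, hb]; ring
  · rw [Matrix.det_fin_two_of]
    have : (0:ℝ) * 0 - a * b = -(a*b) := by ring
    rw [this]; linarith
  · intro z hz
    rw [spectrum.mem_iff] at hz
    rw [Matrix.isUnit_iff_isUnit_det, isUnit_iff_ne_zero, not_not] at hz
    have hdet : (algebraMap ℂ (Matrix (Fin 2) (Fin 2) ℂ) z -
        (!![0, a; b, 0] : Matrix (Fin 2) (Fin 2) ℝ).map (Complex.ofReal ·)).det
        = z ^ 2 - (a : ℂ) * b := by
      simp [Matrix.det_fin_two, Matrix.algebraMap_eq_diagonal, Matrix.diagonal,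
        Matrix.map_apply]
      ring
    rw [hdet, sub_eq_zero] at hz
    have hzsq : z ^ 2 = ((a * b : ℝ) : ℂ) := by push_cast; exact hz
    have hre : z.re * z.re - z.im * z.im = a * b := by
      have := congrArg Complex.re hzsq
      rw [sq, Complex.mul_re] at this
      simpa using this
    have him : z.re * z.im + z.im * z.re = 0 := by
      have := congrArg Complex.im hzsq
      rw [sq, Complex.mul_im] at this
      simpa using this
    have hzre : z.re = 0 := by
      by_contra h
      have him0 : z.im = 0 := by
        have : z.re * z.im = 0 := by linarith
        rcases mul_eq_zero.mp this with h' | h'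
        · exact absurd h' h
        · exact h'
      rw [him0] at hre; nlinarith
    refine ⟨hzre, fun h0 => ?_⟩
    rw [h0] at hzsq
    simp at hzsq
    have h' : b = 0 ∨ a = 0 := by exact_mod_cast hzsq.symm
    rcases h' with h' | h' <;> rw [h'] at hab <;> simp at hab
end

section
/- Let ω_p > 0, ω₁ > 1/2, α < 0, and let G : ℝ² → ℝ² be the map G(M, N) = ((1/ω_p)[ω₁N − N/2 + (3α/4)N(M²+N²)], (1/ω_p)[−ω₁M − M/2 − (3α/4)M(M²+N²)]). At each equilibrium point (0, ±s) with s = √(−4(ω₁ − 1/2)/(3α)), the Jacobian matrix of G has trace 0 and determinant (1 − 2ω₁)/ω_p², which is strictly negative; hence its eigenvalues are real and of opposite signs. -/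
open Real Matrix

lemma matCLM_apply (a b c d : ℝ) (v : ℝ × ℝ) :
    matCLM !![a, b; c, d] v = (a * v.1 + b * v.2, c * v.1 + d * v.2) := by
  simp [matCLM, Matrix.toLin_apply, Fin.sum_univ_two, vecHead, vecTail]
  constructor <;> ring

lemma deriv_lemma (ωp ω₁ α : ℝ) (p : ℝ × ℝ) :
    HasFDerivAt (fun q : ℝ × ℝ =>
        ((1 / ωp) * (ω₁ * q.2 - q.2 / 2 + (3 * α / 4) * q.2 * (q.1 ^ 2 + q.2 ^ 2)),
         (1 / ωp) * (-(ω₁ * q.1) - q.1 / 2 - (3 * α / 4) * q.1 * (q.1 ^ 2 + q.2 ^ 2))))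
      (matCLM !![(1/ωp) * ((3*α/4) * (2 * p.2 * p.1)),
                 (1/ωp) * (ω₁ - 1/2 + (3*α/4) * (p.1^2 + 3*p.2^2));
                 (1/ωp) * (-ω₁ - 1/2 - (3*α/4) * (3*p.1^2 + p.2^2)),
                 (1/ωp) * (-(3*α/4) * (2 * p.1 * p.2))]) p := by
  have h1 : HasFDerivAt (fun q : ℝ × ℝ => q.1) (ContinuousLinearMap.fst ℝ ℝ ℝ) p := hasFDerivAt_fst
  have h2 : HasFDerivAt (fun q : ℝ × ℝ => q.2) (ContinuousLinearMap.snd ℝ ℝ ℝ) p := hasFDerivAt_snd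
  have hsq := (h1.mul h1).add (h2.mul h2)
  have hA := (h2.const_mul ((ω₁ - 1/2)/ωp)).add ((h2.mul hsq).const_mul ((3*α/4)/ωp))
  have hB := (h1.const_mul ((-ω₁ - 1/2)/ωp)).add ((h1.mul hsq).const_mul (-(3*α/4)/ωp))
  have h := hA.prodMk hB
  have heq : (fun q : ℝ × ℝ =>
      (((ω₁ - 1/2)/ωp) * q.2 + ((3*α/4)/ωp) * (q.2 * (q.1 * q.1 + q.2 * q.2)),
       ((-ω₁ - 1/2)/ωp) * q.1 + (-(3*α/4)/ωp) * (q.1 * (q.1 * q.1 + q.2 * q.2)))) =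
      (fun q : ℝ × ℝ =>
        ((1 / ωp) * (ω₁ * q.2 - q.2 / 2 + (3 * α / 4) * q.2 * (q.1 ^ 2 + q.2 ^ 2)),
         (1 / ωp) * (-(ω₁ * q.1) - q.1 / 2 - (3 * α / 4) * q.1 * (q.1 ^ 2 + q.2 ^ 2)))) := by
    funext q; exact Prod.ext (by ring) (by ring)
  rw [← heq]
  refine h.congr_fderiv ?_
  ext v <;> simp [matCLM_apply] <;> ring

/-- at the equilibria (0, ±s) of the Cartesian slow-flow system, the Jacobian
matrix has trace 0 and determinant (1−2ω₁)/ωₚ² < 0, and its eigenvalues are real and of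
opposite signs. -/
theorem stmt_16 (ωp ω₁ α : ℝ) (hωp : 0 < ωp) (hω₁ : ω₁ > 1 / 2) (hα : α < 0)
    (s : ℝ) (hs : s = Real.sqrt (-(4 * (ω₁ - 1 / 2)) / (3 * α))) :
    ∀ p : ℝ × ℝ, p = (0, s) ∨ p = (0, -s) →
      ∃ J : Matrix (Fin 2) (Fin 2) ℝ,
        HasFDerivAt (fun q : ℝ × ℝ =>
            ((1 / ωp) * (ω₁ * q.2 - q.2 / 2 + (3 * α / 4) * q.2 * (q.1 ^ 2 + q.2 ^ 2)),
             (1 / ωp) * (-(ω₁ * q.1) - q.1 / 2 - (3 * α / 4) * q.1 * (q.1 ^ 2 + q.2 ^ 2))))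
          (matCLM J) p ∧
        J.trace = 0 ∧
        J.det = (1 - 2 * ω₁) / ωp ^ 2 ∧
        J.det < 0 ∧
        ∃ μ : ℝ, 0 < μ ∧ μ ∈ spectrum ℝ J ∧ -μ ∈ spectrum ℝ J := by
  intro p hp
  have hωp' : ωp ≠ 0 := ne_of_gt hωp
  have h3α : (3:ℝ) * α ≠ 0 := by nlinarith
  have hx : 0 ≤ -(4 * (ω₁ - 1 / 2)) / (3 * α) :=
    le_of_lt (div_pos_iff.mpr (Or.inr ⟨by nlinarith, by nlinarith⟩))
  have hs2 : s ^ 2 = -(4 * (ω₁ - 1 / 2)) / (3 * α) := by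
    rw [hs]; exact Real.sq_sqrt hx
  have h3 : 3 * α * s ^ 2 = -(4 * (ω₁ - 1 / 2)) := by
    rw [hs2]; field_simp [hα.ne]
  have hp1 : p.1 = 0 := by rcases hp with h | h <;> rw [h]
  have hp2 : p.2 ^ 2 = s ^ 2 := by rcases hp with h | h <;> rw [h] <;> ring
  refine ⟨!![0, (1 - 2 * ω₁)/ωp; -1/ωp, 0], ?_, ?_, ?_, ?_, ?_⟩
  · have h := deriv_lemma ωp ω₁ α p
    have hm : (!![(1/ωp) * ((3*α/4) * (2 * p.2 * p.1)),
                 (1/ωp) * (ω₁ - 1/2 + (3*α/4) * (p.1^2 + 3*p.2^2));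
                 (1/ωp) * (-ω₁ - 1/2 - (3*α/4) * (3*p.1^2 + p.2^2)),
                 (1/ωp) * (-(3*α/4) * (2 * p.1 * p.2))] : Matrix (Fin 2) (Fin 2) ℝ)
        = !![0, (1 - 2 * ω₁)/ωp; -1/ωp, 0] := by
      have e1 : (1/ωp) * (ω₁ - 1/2 + (3*α/4) * (p.1^2 + 3*p.2^2)) = (1 - 2 * ω₁)/ωp := by
        rw [hp1, hp2]; field_simp; linear_combination 6*h3
      have e2 : (1/ωp) * (-ω₁ - 1/2 - (3*α/4) * (3*p.1^2 + p.2^2)) = -1/ωp := by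
        rw [hp1, hp2]; field_simp; linear_combination -2*h3
      rw [e1, e2, hp1]; norm_num
    rwa [hm] at h
  · simp [Matrix.trace_fin_two_of]
  · rw [Matrix.det_fin_two_of]; field_simp; ring
  · rw [Matrix.det_fin_two_of]
    have : (0:ℝ) * 0 - (1 - 2 * ω₁)/ωp * (-1/ωp) = (1 - 2*ω₁)/ωp^2 := by field_simp; ring
    rw [this]
    exact div_neg_of_neg_of_pos (by linarith) (by positivity)
  · refine ⟨Real.sqrt (2*ω₁ - 1) / ωp,
      div_pos (Real.sqrt_pos.mpr (by linarith)) hωp, ?_, ?_⟩ <;>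
    · rw [spectrum.mem_iff, Matrix.isUnit_iff_isUnit_det]
      intro hu
      rw [isUnit_iff_ne_zero] at hu
      apply hu
      have hsq : (Real.sqrt (2*ω₁ - 1)) ^ 2 = 2*ω₁ - 1 := Real.sq_sqrt (by linarith)
      simp [Matrix.det_fin_two, Matrix.algebraMap_matrix_apply]
      field_simp
      nlinarith [hsq]
end
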